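/- arXiv:hep-th/9309118 — 3 statements merged into one kernel-verified Lean document; each statement's English description precedes it below -/
import Mathlib

section
/- Let N ≥ 1 and let z ∈ (ℂ∖{0})^N satisfy max_j |z_j q| < min_j |z_j q⁻¹|, and let r be any radius with max_j |z_j q| < r < min_j |z_j q⁻¹|. Then for every integer k ≥ 0, the contour integral over the anticlockwise circle |x| = r satisfies ∮_{|x|=r} x^{k−1} · ( ∏_{j=1}^N (x − z_jτ) − τ^{2N+4k} ∏_{j=1}^N (x − z_jτ⁻¹) ) · Ψ(x|z₁,…,z_N) dx = 0. -/
open Finset Function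

noncomputable section

/-- The infinite product `(z;p)_∞ = ∏_{k≥0} (1 - z p^k)`. -/
def pochInf (z p : ℂ) : ℂ := ∏' k : ℕ, (1 - z * p ^ k)

/-- `ψ(z) = 1/((zq;q⁴)_∞ (z⁻¹q;q⁴)_∞)`. -/
def psiF (q z : ℂ) : ℂ := 1 / (pochInf (z * q) (q ^ 4) * pochInf (z⁻¹ * q) (q ^ 4))

/-- The kernel `Ψ(x₁,…,xₙ|z₁,…,z_N) = ϑ(x|z)·∏_{μ,j} ψ(x_μ/z_j)`. -/
def kerPsi (q : ℂ) {n N : ℕ} (θ : (Fin n → ℂ) → (Fin N → ℂ) → ℂ)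
    (x : Fin n → ℂ) (z : Fin N → ℂ) : ℂ :=
  θ x z * ∏ μ : Fin n, ∏ j : Fin N, psiF q (x μ / z j)

/-- One-variable kernel `Ψ(x|z₁,…,z_N) = ϑ(x|z)·∏_j ψ(x/z_j)`. -/
def kerPsi1 (q : ℂ) {N : ℕ} (θ : ℂ → (Fin N → ℂ) → ℂ) (x : ℂ) (z : Fin N → ℂ) : ℂ :=
  θ x z * ∏ j : Fin N, psiF q (x / z j)

/-- Elementary symmetric polynomial `σ_κ(a₁,…,a_m)`. -/
def esym {m : ℕ} (a : Fin m → ℂ) (κ : ℕ) : ℂ :=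
  ∑ s ∈ Finset.powersetCard κ (Finset.univ : Finset (Fin m)), ∏ i ∈ s, a i

/-- Complete homogeneous symmetric polynomial `σ̃_κ(a₁,…,a_m)`. -/
def hsym {m : ℕ} (a : Fin m → ℂ) (κ : ℕ) : ℂ :=
  ∑ μ ∈ (Finset.univ : Finset (Fin m)).sym κ, (Multiset.map a (μ : Multiset (Fin m))).prod

/-- `h^{(m)}(x|z) = x⁻¹(∏_j (x - z_jτ) - τ^{2m} ∏_j (x - z_jτ⁻¹))` as a polynomial in `x`
(the bracket vanishes at `x = 0`, so division is exact). -/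
def hN (τ : ℂ) {m : ℕ} (z : Fin m → ℂ) : Polynomial ℂ :=
  ((∏ j : Fin m, (Polynomial.X - Polynomial.C (z j * τ)))
      - Polynomial.C (τ ^ (2 * m)) * ∏ j : Fin m, (Polynomial.X - Polynomial.C (z j * τ⁻¹)))
    /ₘ Polynomial.X

/-- `φ^{(nl)}_{λκ}(a|b)`. -/
def phiP (τ : ℂ) {n l : ℕ} (lam κ : ℕ) (a : Fin n → ℂ) (b : Fin l → ℂ) : ℂ :=
  esym b κ - ∑ β ∈ Finset.Icc lam κ, ∑ α ∈ Finset.Icc lam β,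
    (-1 : ℂ) ^ (β - α) * τ ^ (2 * β) * esym b (κ - β) * esym a α * hsym a (β - α)

/-- `f^{(nl)}_λ(x|a|b) = Σ_{κ=0}^{l−n+λ−2} (1 − τ^{2(l−n+λ−1−κ)})(−τ)^κ φ^{(nl)}_{λκ}(a|b)
x^{l−n+λ−2−κ}` (empty sum if `l−n+λ−2 < 0`). -/
def fP (τ : ℂ) {n l : ℕ} (lam : ℕ) (x : ℂ) (a : Fin n → ℂ) (b : Fin l → ℂ) : ℂ :=
  ∑ κ ∈ Finset.range ((l : ℤ) - n + lam - 1).toNat,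
    (1 - τ ^ (2 * (((l : ℤ) - n + lam - 1).toNat - κ))) * (-τ) ^ κ * phiP τ lam κ a b
      * x ^ (((l : ℤ) - n + lam - 1).toNat - 1 - κ)

/-- `g^{(n)}_λ(x|a) = Σ_{κ=0}^{λ−2} (1 − τ^{2(λ−1−κ)})(−τ)^κ σ_κ(a) x^{λ−2−κ}`. -/
def gP (τ : ℂ) {n : ℕ} (lam : ℕ) (x : ℂ) (a : Fin n → ℂ) : ℂ :=
  ∑ κ ∈ Finset.range (lam - 1),
    (1 - τ ^ (2 * (lam - 1 - κ))) * (-τ) ^ κ * esym a κ * x ^ (lam - 2 - κ)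

/-- `A^{(nl)}_λ(x|a|b)`. -/
def AP (τ : ℂ) {n l : ℕ} (lam : ℕ) (x : ℂ) (a : Fin n → ℂ) (b : Fin l → ℂ) : ℂ :=
  (∏ j : Fin n, (x - a j * τ)) * fP τ lam x a b
    + τ ^ (2 * (l - n + lam - 1)) * (∏ i : Fin l, (x - b i * τ⁻¹)) * gP τ lam x a

/-- `Δ^{(nl)}(x₁,…,xₙ|a|b) = det(A^{(nl)}_λ(x_μ|a|b))_{1 ≤ λ,μ ≤ n}`. -/
def DeltaP (τ : ℂ) {n l : ℕ} (x : Fin n → ℂ) (a : Fin n → ℂ) (b : Fin l → ℂ) : ℂ :=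
  Matrix.det (Matrix.of fun lam μ : Fin n => AP τ ((lam : ℕ) + 1) (x μ) a b)

/-- The explicit `Δ(x|z₁|b₁,…,b_m)` of the case `n = 1` (here `m = N − 1`):
`(x−z₁τ)·Σ_{κ=0}^{N−3}(1−τ^{2(N−2−κ)})(−τ)^κ x^{N−3−κ} Σ_{λ=0}^{κ}(−z₁τ²)^λ σ_{κ−λ}(b)`. -/
def Delta1 (τ : ℂ) {m : ℕ} (x z1 : ℂ) (b : Fin m → ℂ) : ℂ :=
  (x - z1 * τ) * ∑ κ ∈ Finset.range (m - 1),
    (1 - τ ^ (2 * (m - 1 - κ))) * (-τ) ^ κ * x ^ (m - 2 - κ) *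
      ∑ lam ∈ Finset.range (κ + 1), (-(z1 * τ ^ 2)) ^ lam * esym b (κ - lam)

/-- Iterated contour integral over `n` copies of the anticlockwise circle `|x| = ρ`. -/
def multiCircle : (n : ℕ) → ((Fin n → ℂ) → ℂ) → ℝ → ℂ
  | 0, f, _ => f (fun i => i.elim0)
  | n + 1, f, ρ => ∮ t in C(0, ρ), multiCircle n (fun x => f (Fin.cons t x)) ρ

/-- `H(a|b) = ∮⋯∮ F(x|a,b) Ψ(x|a,b) dx₁⋯dxₙ` with
`F = Δ^{(nl)}(x|a|b)/∏_{j,i}(b_i − a_jτ²)`. -/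
def Hfun (q τ : ℂ) {n l : ℕ} (θ : (Fin n → ℂ) → (Fin (n + l) → ℂ) → ℂ)
    (a : Fin n → ℂ) (b : Fin l → ℂ) (ρ : ℝ) : ℂ :=
  multiCircle n (fun x =>
    (DeltaP τ x a b / ∏ j : Fin n, ∏ i : Fin l, (b i - a j * τ ^ 2)) *
      kerPsi q θ x (Fin.append a b)) ρ

/-- The radius `ρ` separates the poles: `max_i |w_i q| < ρ < min_i |w_i q⁻¹|`
for the tuple `w = (a, b)`. -/
def admissible (q : ℂ) {n l : ℕ} (a : Fin n → ℂ) (b : Fin l → ℂ) (ρ : ℝ) : Prop :=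
  (∀ j, ‖a j * q‖ < ρ) ∧ (∀ j, ρ < ‖a j * q⁻¹‖) ∧
  (∀ i, ‖b i * q‖ < ρ) ∧ (∀ i, ρ < ‖b i * q⁻¹‖)

/-- The denominator of `F` does not vanish: `w_i − w_jτ² ≠ 0` for `1 ≤ j ≤ n < i ≤ N`. -/
def regularF (τ : ℂ) {n l : ℕ} (a : Fin n → ℂ) (b : Fin l → ℂ) : Prop :=
  ∀ (j : Fin n) (i : Fin l), b i - a j * τ ^ 2 ≠ 0

end

/-! Write `τ = q⁻¹`. The factor `x - wτ` cancels the pole of `ψ(x/w)` at `x = wτ`, since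
`(uq;q⁴)_∞ = (1 - uq)(uq⁵;q⁴)_∞`: what remains is `-wτ · ψ̃(x/w)` with
`ψ̃(u) = 1/((uq⁵;q⁴)_∞ (u⁻¹q;q⁴)_∞)`, holomorphic on `|q| < |u| < |q|⁻⁵`. So
`G(x) = x^(k-1) ϑ(x|z) ∏_j (-z_jτ) ψ̃(x/z_j)` is holomorphic on the closed annulus
`r ≤ |x| ≤ |τ|⁴ r`, and the quasi-periodicity of `ϑ` shows that the integrand is
`G(x) - τ⁴ G(τ⁴x)` on `|x| = r`. The substitution `x ↦ τ⁴x` turns the integral of the second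
term into that of `G` over `|x| = |τ|⁴ r`, which equals the integral of `G` over `|x| = r` by
Cauchy's theorem on the annulus. -/

open Metric Set

section Pochhammer

variable {p : ℂ} (hp : ‖p‖ < 1)
include hp

lemma summable_norm_mul_pow (z : ℂ) : Summable fun k : ℕ => ‖-(z * p ^ k)‖ := by
  simpa [norm_neg, norm_mul, norm_pow] using
    (summable_geometric_of_lt_one (norm_nonneg p) hp).mul_left ‖z‖

lemma multipliable_pochInf (z : ℂ) : Multipliable fun k : ℕ => 1 - z * p ^ k := by
  simpa only [sub_eq_add_neg] using
    multipliable_one_add_of_summable (f := fun k => -(z * p ^ k)) (summable_norm_mul_pow hp z)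

lemma pochInf_eq_one_sub_mul (z : ℂ) : pochInf z p = (1 - z) * pochInf (z * p) p := by
  have hpow (k : ℕ) : z * p ^ (k + 1) = z * p * p ^ k := by ring
  have hshift : Multipliable fun k : ℕ => 1 - z * p ^ (k + 1) := by
    simpa only [hpow] using multipliable_pochInf hp (z * p)
  unfold pochInf
  rw [tprod_eq_zero_mul' (M := ℂ) (f := fun k => 1 - z * p ^ k) hshift]
  simp only [hpow, pow_zero, mul_one]

lemma pochInf_ne_zero {z : ℂ} (hz : ‖z‖ < 1) : pochInf z p ≠ 0 := by
  have hfactor (k : ℕ) : 1 + -(z * p ^ k) ≠ 0 := by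
    rw [← sub_eq_add_neg, sub_ne_zero]
    intro h
    have : ‖z * p ^ k‖ < 1 := by
      rw [norm_mul, norm_pow]
      exact (mul_le_of_le_one_right (norm_nonneg z) (pow_le_one₀ (norm_nonneg p) hp.le)).trans_lt hz
    rw [← h, norm_one] at this
    exact this.false
  simpa [pochInf, sub_eq_add_neg] using
    tprod_one_add_ne_zero_of_summable hfactor (summable_norm_mul_pow hp z)

lemma differentiable_pochInf : Differentiable ℂ fun z => pochInf z p := by
  intro z₀
  set R := ‖z₀‖ + 1
  have hu := (summable_geometric_of_lt_one (norm_nonneg p) hp).mul_left R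
  have hprod : HasProdLocallyUniformlyOn (fun k z => 1 + -(z * p ^ k))
      (fun z => ∏' k, (1 + -(z * p ^ k))) (ball 0 R) :=
    hu.hasProdLocallyUniformlyOn_nat_one_add isOpen_ball (.of_forall fun k z hz => by
        rw [mem_ball_zero_iff] at hz
        simpa [norm_mul] using mul_le_mul_of_nonneg_right hz.le (pow_nonneg (norm_nonneg p) k))
      (fun k => by fun_prop)
  have hdiff := hprod.differentiableOn (.of_forall fun s => by
    simpa [Finset.prod_fn] using DifferentiableOn.finsetProd (fun _ _ => by fun_prop))
    isOpen_ball
  simpa [pochInf, sub_eq_add_neg] using hdiff.differentiableAt (isOpen_ball.mem_nhds (by simp [R]))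

end Pochhammer

noncomputable def psiReg (q u : ℂ) : ℂ :=
  1 / (pochInf (u * q ^ 5) (q ^ 4) * pochInf (u⁻¹ * q) (q ^ 4))

section PsiReg

variable {q : ℂ} (hq : ‖q‖ < 1)
include hq

lemma norm_pow_four_lt_one : ‖q ^ 4‖ < 1 := by
  rw [norm_pow]; exact pow_lt_one₀ (norm_nonneg q) hq (by norm_num)

lemma one_sub_mul_psiF {u : ℂ} (hu : u * q ≠ 1) : (1 - u * q) * psiF q u = psiReg q u := by
  have hu' : 1 - u * q ≠ 0 := sub_ne_zero.mpr hu.symm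
  rw [psiF, psiReg, pochInf_eq_one_sub_mul (norm_pow_four_lt_one hq) (u * q)]
  field_simp

lemma psiReg_mul_inv_pow_four {u : ℂ} (hq0 : q ≠ 0) (hu : u⁻¹ * q ≠ 1) :
    psiReg q (u * q⁻¹ ^ 4) = (1 - u⁻¹ * q) * psiF q u := by
  have hu' : 1 - u⁻¹ * q ≠ 0 := sub_ne_zero.mpr hu.symm
  rw [psiF, psiReg, pochInf_eq_one_sub_mul (norm_pow_four_lt_one hq) (u⁻¹ * q),
    show u * q⁻¹ ^ 4 * q ^ 5 = u * q by field_simp,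
    show (u * q⁻¹ ^ 4)⁻¹ * q = u⁻¹ * q * q ^ 4 by field_simp]
  field_simp
  rw [div_mul_cancel_right₀ (by rwa [div_eq_mul_inv, mul_comm]), one_div]

lemma differentiableAt_psiReg {u : ℂ} (hu₁ : ‖q‖ < ‖u‖) (hu₂ : ‖u * q ^ 5‖ < 1) :
    DifferentiableAt ℂ (psiReg q) u := by
  have hu0 : u ≠ 0 := norm_pos_iff.mp ((norm_nonneg q).trans_lt hu₁)
  have hu₃ : ‖u⁻¹ * q‖ < 1 := by
    rw [norm_mul, norm_inv, inv_mul_lt_one₀ (norm_pos_iff.mpr hu0)]; exact hu₁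
  have hp := norm_pow_four_lt_one hq
  have hP := differentiable_pochInf hp
  refine (differentiableAt_const 1).div ((hP _).comp u (by fun_prop) |>.mul ((hP _).comp u ?_))
    (mul_ne_zero (pochInf_ne_zero hp hu₂) (pochInf_ne_zero hp hu₃))
  exact (differentiableAt_inv hu0).mul_const q

end PsiReg

lemma mul_circleMap_zero (a : ℂ) (r θ : ℝ) :
    a * circleMap 0 r θ = circleMap 0 (‖a‖ * r) (θ + Complex.arg a) := by
  simp only [circleMap, zero_add]
  conv_lhs => rw [← Complex.norm_mul_exp_arg_mul_I a]
  push_cast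
  rw [add_mul, Complex.exp_add]
  ring

lemma circleIntegral_const_mul_comp_mul (f : ℂ → ℂ) (a : ℂ) (r : ℝ) :
    (∮ y in C(0, r), a * f (a * y)) = ∮ x in C(0, ‖a‖ * r), f x := by
  set g : ℝ → ℂ := fun θ => deriv (circleMap 0 (‖a‖ * r)) θ • f (circleMap 0 (‖a‖ * r) θ)
  have hg : Periodic g (2 * Real.pi) := fun θ => by
    simp only [g, deriv_circleMap, periodic_circleMap 0 (‖a‖ * r) θ]
  have hshift (θ : ℝ) :
      deriv (circleMap 0 r) θ • (a * f (a * circleMap 0 r θ)) = g (θ + Complex.arg a) := by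
    simp only [g, deriv_circleMap, smul_eq_mul, ← mul_circleMap_zero]
    ring
  simp only [circleIntegral, hshift]
  rw [intervalIntegral.integral_comp_add_right g, zero_add, add_comm _ (Complex.arg a),
    hg.intervalIntegral_add_eq (Complex.arg a) 0, zero_add]

lemma circleIntegral_sub_const_mul_comp_mul_eq_zero {G : ℂ → ℂ} {a : ℂ} {r : ℝ} (hr : 0 < r)
    (ha : 1 ≤ ‖a‖) (hG : DifferentiableOn ℂ G (closedBall 0 (‖a‖ * r) \ ball 0 r)) :
    (∮ x in C(0, r), (G x - a * G (a * x))) = 0 := by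
  have hrR : r ≤ ‖a‖ * r := le_mul_of_one_le_left hr.le ha
  have hinner : sphere (0 : ℂ) r ⊆ closedBall 0 (‖a‖ * r) \ ball 0 r := fun x hx => by
    simp_all
  have houter : MapsTo (a * ·) (sphere 0 r) (closedBall 0 (‖a‖ * r) \ ball 0 r) := fun x hx => by
    simp_all
  have hint₁ : CircleIntegrable G 0 r := (hG.continuousOn.mono hinner).circleIntegrable hr.le
  have hint₂ : CircleIntegrable (fun x => a * G (a * x)) 0 r :=
    (continuousOn_const.mul (hG.continuousOn.comp (by fun_prop) houter)).circleIntegrable hr.le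
  rw [circleIntegral.integral_sub hint₁ hint₂, circleIntegral_const_mul_comp_mul,
    Complex.circleIntegral_eq_of_differentiable_on_annulus_off_countable hr hrR countable_empty
      hG.continuousOn fun x hx => hG.differentiableAt ?_, sub_self]
  exact Filter.mem_of_superset ((isOpen_ball.sdiff isClosed_closedBall).mem_nhds hx.1)
    (sdiff_subset_sdiff ball_subset_closedBall ball_subset_closedBall)

noncomputable def kerPsiReg (q : ℂ) {N : ℕ} (θ : ℂ → (Fin N → ℂ) → ℂ) (x : ℂ) (z : Fin N → ℂ) :
    ℂ :=
  θ x z * ∏ j, -(z j * q⁻¹) * psiReg q (x / z j)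

section KerPsiReg

variable {q : ℂ} (hq : ‖q‖ < 1) {N : ℕ} {θ : ℂ → (Fin N → ℂ) → ℂ} {z : Fin N → ℂ} {x : ℂ}
include hq

lemma kerPsiReg_eq (hq0 : q ≠ 0) (hz : ∀ j, z j ≠ 0) (hx : ∀ j, x ≠ z j * q⁻¹) :
    kerPsiReg q θ x z = (∏ j, (x - z j * q⁻¹)) * kerPsi1 q θ x z := by
  have hfactor (j : Fin N) :
      -(z j * q⁻¹) * psiReg q (x / z j) = (x - z j * q⁻¹) * psiF q (x / z j) := by
    have hzj := hz j
    have hxj : x / z j * q ≠ 1 := fun h => hx j (by field_simp at h ⊢; exact h)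
    rw [← one_sub_mul_psiF hq hxj]
    field_simp
    ring
  rw [kerPsiReg, kerPsi1, Finset.prod_congr rfl fun j _ => hfactor j, Finset.prod_mul_distrib]
  ring

lemma kerPsiReg_mul_inv_pow_four (hq0 : q ≠ 0) (hz : ∀ j, z j ≠ 0) (hx0 : x ≠ 0)
    (hx : ∀ j, x ≠ z j * q) (hθ : θ (x * q⁻¹ ^ 4) z = θ x z * ∏ j, (-x * q⁻¹ / z j)) :
    kerPsiReg q θ (x * q⁻¹ ^ 4) z = q⁻¹ ^ (2 * N) * (∏ j, (x - z j * q)) * kerPsi1 q θ x z := by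
  have hfactor (j : Fin N) : -x * q⁻¹ / z j * (-(z j * q⁻¹) * psiReg q (x * q⁻¹ ^ 4 / z j)) =
      q⁻¹ ^ 2 * ((x - z j * q) * psiF q (x / z j)) := by
    have hzj := hz j
    have hxj : (x / z j)⁻¹ * q ≠ 1 := fun h => hx j (by field_simp at h; exact h.symm)
    rw [show x * q⁻¹ ^ 4 / z j = x / z j * q⁻¹ ^ 4 by ring,
      psiReg_mul_inv_pow_four hq hq0 hxj]
    field_simp
  rw [kerPsiReg, kerPsi1, hθ, mul_assoc, ← Finset.prod_mul_distrib,
    Finset.prod_congr rfl fun j _ => hfactor j, Finset.prod_mul_distrib, Finset.prod_mul_distrib,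
    Finset.prod_const, Finset.card_univ, Fintype.card_fin, ← pow_mul]
  ring

lemma zpow_mul_kerPsi1_eq_sub (k : ℕ) (hq0 : q ≠ 0) (hz : ∀ j, z j ≠ 0) (hx0 : x ≠ 0)
    (hxτ : ∀ j, x ≠ z j * q⁻¹) (hxq : ∀ j, x ≠ z j * q)
    (hθ : θ (x * q⁻¹ ^ 4) z = θ x z * ∏ j, (-x * q⁻¹ / z j)) :
    x ^ ((k : ℤ) - 1) *
        ((∏ j, (x - z j * q⁻¹)) - q⁻¹ ^ (2 * N + 4 * k) * ∏ j, (x - z j * q)) * kerPsi1 q θ x z =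
      x ^ ((k : ℤ) - 1) * kerPsiReg q θ x z -
        q⁻¹ ^ 4 * ((q⁻¹ ^ 4 * x) ^ ((k : ℤ) - 1) * kerPsiReg q θ (q⁻¹ ^ 4 * x) z) := by
  have hpow : q⁻¹ ^ 4 * (x * q⁻¹ ^ 4) ^ ((k : ℤ) - 1) = q⁻¹ ^ (4 * k) * x ^ ((k : ℤ) - 1) := by
    rw [mul_zpow, mul_left_comm, ← zpow_one_add₀ (by positivity), add_sub_cancel,
      zpow_natCast, pow_mul, mul_comm]
  rw [kerPsiReg_eq hq hq0 hz hxτ, mul_comm (q⁻¹ ^ 4) x,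
    kerPsiReg_mul_inv_pow_four hq hq0 hz hx0 hxq hθ]
  linear_combination (q⁻¹ ^ (2 * N) * (∏ j, (x - z j * q)) * kerPsi1 q θ x z) * hpow

lemma differentiableAt_kerPsiReg (hθ : DifferentiableAt ℂ (fun y => θ y z) x)
    (hx₁ : ∀ j, ‖z j * q‖ < ‖x‖) (hx₂ : ∀ j, ‖x * q ^ 5‖ < ‖z j‖) :
    DifferentiableAt ℂ (fun y => kerPsiReg q θ y z) x := by
  have hz (j : Fin N) : 0 < ‖z j‖ := (norm_nonneg _).trans_lt (hx₂ j)
  refine hθ.mul (DifferentiableAt.fun_finsetProd fun j _ => (differentiableAt_const _).mul ?_)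
  refine (differentiableAt_psiReg hq ?_ ?_).comp x (differentiableAt_id.div_const (z j))
  · rw [norm_div, lt_div_iff₀ (hz j), ← norm_mul, mul_comm]; exact hx₁ j
  · rw [div_mul_eq_mul_div, norm_div, div_lt_one (hz j)]; exact hx₂ j

end KerPsiReg

lemma norm_mul_pow_five_lt {q x w : ℂ} {r : ℝ} (hq : q ≠ 0) (hx : ‖x‖ ≤ ‖q⁻¹ ^ 4‖ * r)
    (hw : r < ‖w * q⁻¹‖) : ‖x * q ^ 5‖ < ‖w‖ := by
  have hq' : 0 < ‖q‖ := norm_pos_iff.mpr hq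
  rw [norm_mul, norm_inv, lt_mul_inv_iff₀ hq'] at hw
  calc ‖x * q ^ 5‖ ≤ ‖q⁻¹ ^ 4‖ * r * ‖q ^ 5‖ := by rw [norm_mul]; gcongr
    _ = r * ‖q‖ := by rw [norm_pow, norm_inv, norm_pow]; field_simp
    _ < ‖w‖ := hw

/-- the vanishing contour integrals used in Lemma 2. -/
theorem stmt_3 (q : ℂ) (hq0 : 0 < ‖q‖) (hq1 : ‖q‖ < 1)
    (τ : ℂ) (hτ : τ = q⁻¹) (N : ℕ) (hN : 0 < N)
    (z : Fin N → ℂ) (hz : ∀ j, z j ≠ 0)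
    (θ : ℂ → (Fin N → ℂ) → ℂ)
    (hholo : ∀ w : Fin N → ℂ, DifferentiableOn ℂ (fun x => θ x w) {(0 : ℂ)}ᶜ)
    (hθ : ∀ (x : ℂ) (w : Fin N → ℂ), θ (x * τ ^ 4) w = θ x w * ∏ j, (-x * τ / w j))
    (r : ℝ) (hr1 : ∀ j, ‖z j * q‖ < r)
    (hr2 : ∀ j, r < ‖z j * q⁻¹‖) (k : ℕ) :
    (∮ x in C(0, r), x ^ ((k : ℤ) - 1) *
        ((∏ j, (x - z j * τ)) - τ ^ (2 * N + 4 * k) * ∏ j, (x - z j * τ⁻¹)) *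
        kerPsi1 q θ x z) = 0 := by
  subst hτ
  simp only [inv_inv]
  have hq : q ≠ 0 := norm_pos_iff.mp hq0
  have hr : 0 < r := (norm_nonneg _).trans_lt (hr1 ⟨0, hN⟩)
  have ha : 1 ≤ ‖q⁻¹ ^ 4‖ := by
    rw [norm_pow, norm_inv]; exact one_le_pow₀ ((one_le_inv₀ hq0).mpr hq1.le)
  have hG : DifferentiableOn ℂ (fun y => y ^ ((k : ℤ) - 1) * kerPsiReg q θ y z)
      (closedBall 0 (‖q⁻¹ ^ 4‖ * r) \ ball 0 r) := by
    rintro x ⟨hxR, hxr⟩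
    rw [mem_closedBall_zero_iff] at hxR
    rw [mem_ball_zero_iff, not_lt] at hxr
    have hx0 : x ≠ 0 := norm_pos_iff.mp (hr.trans_le hxr)
    refine ((differentiableAt_zpow.mpr (.inl hx0)).mul (differentiableAt_kerPsiReg hq1
      ((hholo z).differentiableAt (isOpen_compl_singleton.mem_nhds hx0))
      (fun j => (hr1 j).trans_le hxr) fun j => norm_mul_pow_five_lt hq hxR (hr2 j))
      ).differentiableWithinAt
  refine (circleIntegral.integral_congr hr.le fun x hx => ?_).trans
    (circleIntegral_sub_const_mul_comp_mul_eq_zero hr ha hG)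
  rw [mem_sphere_zero_iff_norm] at hx
  exact zpow_mul_kerPsi1_eq_sub hq1 k hq hz (norm_pos_iff.mp (hx ▸ hr))
    (fun j h => (hr2 j).ne (h ▸ hx).symm) (fun j h => (hr1 j).ne (h ▸ hx)) (hθ x z)
end

section
/- For all integers 1 ≤ n < l with N = n + l, the polynomial identity A^{(nl)}_{n+1}(x|z₁,…,zₙ|z_{n+1},…,z_N) = h^{(N)}(x|z₁,…,z_N) holds. -/
open Finset Function

/-!
With `λ = n + 1` the correction sum in `φ` vanishes, because `σ_α(a) = 0` for `α > n`; by Vieta's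
formula `f_{n+1}(x|a|b)` and `g_{n+1}(x|a)` are then `h^{(l)}(x|b)` and `h^{(n)}(x|a)` expanded in
monomials. After multiplying by `x`, the claim becomes the telescoping identity
`W_N(a,b) = ∏_j (x - a_jτ) · W_l(b) + τ^{2l} ∏_i (x - b_iτ⁻¹) · W_n(a)` for the numerators
`W_m(c) = ∏ (x - c_jτ) - τ^{2m} ∏ (x - c_jτ⁻¹)`, and `x` cancels in `ℂ[X]`.
-/

open Polynomial

lemma esym_eq_esymm {m : ℕ} (c : Fin m → ℂ) (κ : ℕ) : esym c κ = (univ.val.map c).esymm κ := by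
  rw [Finset.esymm_map_val]; rfl

lemma esym_smul {m : ℕ} (t : ℂ) (c : Fin m → ℂ) (κ : ℕ) :
    esym (fun j => t * c j) κ = t ^ κ * esym c κ := by
  rw [esym, esym, Finset.mul_sum]
  refine Finset.sum_congr rfl fun s hs => ?_
  rw [Finset.prod_mul_distrib, Finset.prod_const, (Finset.mem_powersetCard.mp hs).2]

lemma prod_X_sub_C_mul_eq_sum_esym {m : ℕ} (t : ℂ) (c : Fin m → ℂ) :
    ∏ j, (X - C (c j * t)) = ∑ κ ∈ range (m + 1), C ((-t) ^ κ * esym c κ) * X ^ (m - κ) := by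
  have vieta := Multiset.prod_X_add_C_eq_sum_esymm (univ.val.map fun j => -t * c j)
  simp only [Multiset.card_map, card_val, card_fin, ← esym_eq_esymm, esym_smul] at vieta
  rw [← vieta, Finset.prod, Multiset.map_map]
  refine congrArg _ (Multiset.map_congr rfl fun j _ => ?_)
  simp only [comp_apply, map_neg, map_mul]
  ring

lemma esym_eq_zero_of_lt {m : ℕ} (c : Fin m → ℂ) {κ : ℕ} (h : m < κ) : esym c κ = 0 := by
  rw [esym, Finset.powersetCard_eq_empty.2 (by simpa using h), Finset.sum_empty]

lemma pow_two_mul_mul_neg_inv_pow {K : Type*} [Field K] (τ : K) {m κ : ℕ} (h : κ ≤ m) :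
    τ ^ (2 * m) * (-τ⁻¹) ^ κ = (-τ) ^ κ * τ ^ (2 * (m - κ)) := by
  calc τ ^ (2 * m) * (-τ⁻¹) ^ κ = (-1) ^ κ * (τ * τ⁻¹ * τ) ^ κ * τ ^ (2 * (m - κ)) := by
        rw [show 2 * m = κ + κ + 2 * (m - κ) by omega]; ring
    _ = (-τ) ^ κ * τ ^ (2 * (m - κ)) := by rw [mul_inv_mul_cancel]; ring

noncomputable def hNumer (τ : ℂ) {m : ℕ} (c : Fin m → ℂ) : ℂ[X] :=
  ∏ j, (X - C (c j * τ)) - C (τ ^ (2 * m)) * ∏ j, (X - C (c j * τ⁻¹))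

noncomputable def hExpand (τ : ℂ) {m : ℕ} (c : Fin m → ℂ) : ℂ[X] :=
  ∑ κ ∈ range m, C ((1 - τ ^ (2 * (m - κ))) * (-τ) ^ κ * esym c κ) * X ^ (m - 1 - κ)

lemma hNumer_eq_sum (τ : ℂ) {m : ℕ} (c : Fin m → ℂ) :
    hNumer τ c = ∑ κ ∈ range (m + 1),
      C ((1 - τ ^ (2 * (m - κ))) * (-τ) ^ κ * esym c κ) * X ^ (m - κ) := by
  rw [hNumer, prod_X_sub_C_mul_eq_sum_esym, prod_X_sub_C_mul_eq_sum_esym, Finset.mul_sum,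
    ← Finset.sum_sub_distrib]
  refine Finset.sum_congr rfl fun κ hκ => ?_
  have hcoef := pow_two_mul_mul_neg_inv_pow τ (Nat.lt_succ_iff.mp (Finset.mem_range.mp hκ))
  rw [← mul_assoc, ← map_mul, ← sub_mul, ← map_sub]
  congr 2
  linear_combination -(esym c κ) * hcoef

lemma X_mul_hExpand (τ : ℂ) {m : ℕ} (c : Fin m → ℂ) : X * hExpand τ c = hNumer τ c := by
  rw [hNumer_eq_sum, Finset.sum_range_succ, Nat.sub_self, Nat.mul_zero, pow_zero, sub_self,
    zero_mul, zero_mul, map_zero, zero_mul, add_zero, hExpand, Finset.mul_sum]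
  refine Finset.sum_congr rfl fun κ hκ => ?_
  rw [mul_left_comm, ← pow_succ', show m - 1 - κ + 1 = m - κ by grind]

lemma hN_eq_hExpand (τ : ℂ) {m : ℕ} (c : Fin m → ℂ) : hN τ c = hExpand τ c := by
  rw [hN, ← hNumer, ← X_mul_hExpand, mul_divByMonic_cancel_left _ monic_X]

lemma gP_succ_eq_eval (τ : ℂ) {m : ℕ} (x : ℂ) (c : Fin m → ℂ) :
    gP τ (m + 1) x c = (hExpand τ c).eval x := by
  rw [gP, hExpand, eval_finsetSum, Nat.add_sub_cancel]
  refine Finset.sum_congr rfl fun κ _ => ?_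
  rw [eval_mul, eval_C, eval_pow, eval_X, show m + 1 - 2 - κ = m - 1 - κ by omega]

lemma phiP_card_succ_eq_esym (τ : ℂ) {n l : ℕ} (κ : ℕ) (a : Fin n → ℂ) (b : Fin l → ℂ) :
    phiP τ (n + 1) κ a b = esym b κ := by
  rw [phiP, sub_eq_self]
  refine Finset.sum_eq_zero fun β _ => Finset.sum_eq_zero fun α hα => ?_
  rw [esym_eq_zero_of_lt a (by grind), mul_zero, zero_mul]

lemma fP_card_succ_eq_eval (τ : ℂ) {n l : ℕ} (hnl : n ≤ l) (x : ℂ) (a : Fin n → ℂ)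
    (b : Fin l → ℂ) : fP τ (n + 1) x a b = (hExpand τ b).eval x := by
  rw [fP, hExpand, eval_finsetSum, show ((l : ℤ) - n + (n + 1 : ℕ) - 1).toNat = l by omega]
  refine Finset.sum_congr rfl fun κ _ => ?_
  rw [phiP_card_succ_eq_esym, eval_mul, eval_C, eval_pow, eval_X]

lemma hExpand_append (τ : ℂ) {n l : ℕ} (a : Fin n → ℂ) (b : Fin l → ℂ) :
    hExpand τ (Fin.append a b) = (∏ j, (X - C (a j * τ))) * hExpand τ b
      + C (τ ^ (2 * l)) * (∏ i, (X - C (b i * τ⁻¹))) * hExpand τ a := by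
  refine mul_left_cancel₀ X_ne_zero ?_
  have hab := X_mul_hExpand τ (Fin.append a b)
  have ha := X_mul_hExpand τ a
  have hb := X_mul_hExpand τ b
  simp only [hNumer, Fin.prod_univ_add, Fin.append_left, Fin.append_right] at hab ha hb
  rw [mul_add, pow_add, C_mul] at hab
  linear_combination hab - (∏ j, (X - C (a j * τ))) * hb
    - C (τ ^ (2 * l)) * (∏ i, (X - C (b i * τ⁻¹))) * ha

theorem stmt_9_general (τ : ℂ) (n l : ℕ) (hnl : n < l)
    (x : ℂ) (a : Fin n → ℂ) (b : Fin l → ℂ) :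
    AP τ (n + 1) x a b = (hN τ (Fin.append a b)).eval x := by
  rw [AP, fP_card_succ_eq_eval τ hnl.le, gP_succ_eq_eval, hN_eq_hExpand, hExpand_append,
    show l - n + (n + 1) - 1 = l by omega]
  simp [eval_prod]

/-- `A^{(nl)}_{n+1}(x|z₁,…,zₙ|z_{n+1},…,z_N) = h^{(N)}(x|z₁,…,z_N)`. -/
theorem stmt_9 (q : ℂ) (hq0 : 0 < ‖q‖) (hq1 : ‖q‖ < 1)
    (τ : ℂ) (hτ : τ = q⁻¹) (n l : ℕ) (hn : 1 ≤ n) (hnl : n < l)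
    (x : ℂ) (a : Fin n → ℂ) (b : Fin l → ℂ) :
    AP τ (n + 1) x a b = (hN τ (Fin.append a b)).eval x :=
  stmt_9_general τ n l hnl x a b
end

section
/- (Lemma recA.) For all integers 1 ≤ n < l and λ ≥ 1, the recursion A^{(nl)}_λ(x|a₁,…,a_{n−1},a|b₁,…,b_{l−1},aτ²) = (x − aτ) · ( A^{(n−1,l−1)}_λ(x|a₁,…,a_{n−1}|b₁,…,b_{l−1}) − aτ³ · A^{(n−1,l−1)}_{λ−1}(x|a₁,…,a_{n−1}|b₁,…,b_{l−1}) ) holds as an identity of polynomials. -/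
open Finset Function

/-! Take generating functions in `κ`. With `E_a(t) = ∑ σ_κ(a) tᵏ = ∏ (1 + a_j t)`, whose inverse
is `∑ (-1)ᵏ σ̃_κ(a) tᵏ`, the `φ_{λκ}(a|b)` are the coefficients of
`E_b(t) (1 - E_a^{≥λ}(τ²t) / E_a(τ²t))`, where `E_a^{≥λ}` keeps the terms of degree `≥ λ`.
Appending `a` to the `a`'s and `aτ²` to the `b`'s multiplies both `E_b(t)` and `E_a(τ²t)` by
`1 + aτ²t`, while `E_a^{≥λ+1}` gains `aτ²t E_a^{≥λ}`; so `φ_{λ+1,κ+1}` gains `aτ² φ_{λκ}`.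
Both `f_λ` and `g_λ` are the same weighted sum of coefficients, in which multiplication by `t`
becomes multiplication by `-τ`, and the new factor of the `b`-product is `x - aτ²·τ⁻¹ = x - aτ`. -/

open PowerSeries

section SymmetricFunctions

lemma Multiset.esymm_cons_succ {R : Type*} [CommSemiring R] (s : Multiset R) (r : R) (κ : ℕ) :
    (r ::ₘ s).esymm (κ + 1) = s.esymm (κ + 1) + r * s.esymm κ := by
  simp [Multiset.esymm, Multiset.powersetCard_cons, Multiset.map_map, Multiset.sum_map_mul_left]

lemma Sym.sum_option_succ {α R : Type*} [Fintype α] [DecidableEq α] [CommSemiring R]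
    (g : Option α → R) (κ : ℕ) :
    ∑ ν : Sym (Option α) (κ + 1), ((ν : Multiset (Option α)).map g).prod
      = ∑ s : Sym α (κ + 1), ((s : Multiset α).map (g ∘ some)).prod
        + g none * ∑ ν : Sym (Option α) κ, ((ν : Multiset (Option α)).map g).prod := by
  rw [← Equiv.sum_comp (symOptionSuccEquiv (α := α) (n := κ)).symm, Fintype.sum_sum_type, add_comm,
    mul_sum]
  congr 1
  · refine sum_congr rfl fun s _ => ?_
    change ((Sym.map Embedding.some s).1.map g).prod = _
    rw [Sym.val_eq_coe, Sym.coe_map, Multiset.map_map]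
    rfl
  · refine sum_congr rfl fun s _ => ?_
    change (((none ::ₛ s : Sym (Option α) (κ + 1)) : Multiset (Option α)).map g).prod = _
    rw [Sym.coe_cons, Multiset.map_cons, Multiset.prod_cons]

variable {m : ℕ} (a : Fin m → ℂ) (c : ℂ)

lemma esym_zero : esym a 0 = 1 := by
  simp [esym]

lemma hsym_zero : hsym a 0 = 1 := by
  simp only [hsym, sym_zero, sum_singleton]
  rfl

lemma esym_snoc_succ (κ : ℕ) : esym (Fin.snoc a c) (κ + 1) = esym a (κ + 1) + c * esym a κ := by
  have hval : (univ : Finset (Fin (m + 1))).val.map (Fin.snoc a c) = c ::ₘ univ.val.map a := by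
    rw [Fin.univ_castSuccEmb, cons_val, Multiset.map_cons, map_val, Multiset.map_map]
    simp [Function.comp_def]
  simp only [esym, ← Finset.esymm_map_val, hval, Multiset.esymm_cons_succ]

lemma hsym_snoc_eq_sum_option (κ : ℕ) :
    hsym (Fin.snoc a c) κ
      = ∑ ν : Sym (Option (Fin m)) κ,
          ((ν : Multiset (Option (Fin m))).map (Option.elim · c a)).prod := by
  rw [hsym, sym_univ, ← (Sym.equivCongr (finSuccEquivLast (n := m))).sum_comp]
  refine sum_congr rfl fun μ _ => ?_
  change _ = ((Sym.map _ μ).1.map _).prod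
  rw [Sym.val_eq_coe, Sym.coe_map, Multiset.map_map]
  congr 1
  refine Multiset.map_congr rfl fun i _ => ?_
  induction i using Fin.lastCases <;> simp

lemma hsym_snoc_succ (κ : ℕ) :
    hsym (Fin.snoc a c) (κ + 1) = hsym a (κ + 1) + c * hsym (Fin.snoc a c) κ := by
  rw [hsym_snoc_eq_sum_option, Sym.sum_option_succ, hsym_snoc_eq_sum_option, hsym, sym_univ]
  rfl

end SymmetricFunctions

section GeneratingSeries

lemma coeff_one_add_C_mul_X_mul {R : Type*} [CommSemiring R] (r : R) (f : R⟦X⟧) (κ : ℕ) :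
    coeff (κ + 1) ((1 + C r * X) * f) = coeff (κ + 1) f + r * coeff κ f := by
  rw [add_mul, one_mul, map_add, mul_assoc, coeff_C_mul, coeff_succ_X_mul]

variable {m : ℕ} (a : Fin m → ℂ) (c : ℂ)

noncomputable def esymSeries : ℂ⟦X⟧ := mk (esym a)

noncomputable def esymTail (L : ℕ) : ℂ⟦X⟧ := mk fun α => if L ≤ α then esym a α else 0

noncomputable def hsymAltSeries : ℂ⟦X⟧ := mk fun κ => (-1) ^ κ * hsym a κ

lemma esymSeries_snoc : esymSeries (Fin.snoc a c) = (1 + C c * X) * esymSeries a := by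
  ext (_ | κ)
  · simp [esymSeries, esym_zero]
  · rw [coeff_one_add_C_mul_X_mul]
    simp only [esymSeries, coeff_mk, esym_snoc_succ]

lemma esymTail_snoc (L : ℕ) :
    esymTail (Fin.snoc a c) (L + 1) = esymTail a (L + 1) + C c * X * esymTail a L := by
  ext (_ | κ)
  · simp [esymTail]
  · rw [map_add, mul_assoc, coeff_C_mul, coeff_succ_X_mul]
    simp only [esymTail, coeff_mk, esym_snoc_succ, add_le_add_iff_right]
    split_ifs <;> ring

lemma one_add_C_mul_X_mul_hsymAltSeries_snoc :
    (1 + C c * X) * hsymAltSeries (Fin.snoc a c) = hsymAltSeries a := by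
  ext (_ | κ)
  · simp [hsymAltSeries, hsym_zero]
  · rw [coeff_one_add_C_mul_X_mul]
    simp only [hsymAltSeries, coeff_mk, hsym_snoc_succ, pow_succ]
    ring

lemma coeff_esymTail_mul_hsymAltSeries (L β : ℕ) :
    coeff β (esymTail a L * hsymAltSeries a)
      = ∑ α ∈ Icc L β, (-1) ^ (β - α) * esym a α * hsym a (β - α) := by
  have hfilter : (range (β + 1)).filter (L ≤ ·) = Icc L β := by
    ext; simp only [mem_filter, mem_range, mem_Icc]; omega
  rw [coeff_mul, Nat.sum_antidiagonal_eq_sum_range_succ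
    (fun α j => coeff α (esymTail a L) * coeff j (hsymAltSeries a)), ← hfilter, sum_filter]
  refine sum_congr rfl fun α _ => ?_
  simp only [esymTail, hsymAltSeries, coeff_mk]
  split_ifs <;> ring

end GeneratingSeries

section PhiSeries

variable (τ : ℂ) {n l : ℕ}

noncomputable def phiSeries (L : ℕ) (a : Fin n → ℂ) (b : Fin l → ℂ) : ℂ⟦X⟧ :=
  esymSeries b * (1 - rescale (τ ^ 2) (esymTail a L * hsymAltSeries a))

lemma coeff_phiSeries (L κ : ℕ) (a : Fin n → ℂ) (b : Fin l → ℂ) :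
    coeff κ (phiSeries τ L a b) = phiP τ L κ a b := by
  have hsupp : Icc L κ ⊆ range (κ + 1) := fun β hβ => by
    simp only [mem_Icc, mem_range] at hβ ⊢; omega
  rw [phiSeries, mul_sub, mul_one, map_sub, mul_comm, coeff_mul,
    Nat.sum_antidiagonal_eq_sum_range_succ (fun β i => coeff β (rescale (τ ^ 2)
      (esymTail a L * hsymAltSeries a)) * coeff i (esymSeries b)), phiP, esymSeries, coeff_mk,
    ← sum_subset hsupp fun β hβκ hβ => ?_]
  · congr 1
    refine sum_congr rfl fun β _ => ?_
    rw [coeff_rescale, coeff_esymTail_mul_hsymAltSeries, coeff_mk, mul_sum, sum_mul]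
    refine sum_congr rfl fun α _ => ?_
    ring
  · have hLβ : ¬L ≤ β := by simp only [mem_Icc, mem_range] at hβκ hβ; omega
    rw [coeff_rescale, coeff_esymTail_mul_hsymAltSeries, Icc_eq_empty hLβ, sum_empty, mul_zero,
      zero_mul]

variable {m k : ℕ} (a : Fin m → ℂ) (c : ℂ) (b : Fin k → ℂ)

lemma phiSeries_snoc (L : ℕ) :
    phiSeries τ (L + 1) (Fin.snoc a c) (Fin.snoc b (c * τ ^ 2))
      = phiSeries τ (L + 1) a b + C (c * τ ^ 2) * X * phiSeries τ L a b := by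
  have hfactor : rescale (τ ^ 2) (C c * X) = C (c * τ ^ 2) * X := by
    ext κ
    rw [coeff_rescale, coeff_C_mul, coeff_C_mul, coeff_X]
    split_ifs with hκ
    · rw [hκ]; ring
    · simp
  have hprod : (1 + C c * X) * (esymTail (Fin.snoc a c) (L + 1) * hsymAltSeries (Fin.snoc a c))
      = esymTail a (L + 1) * hsymAltSeries a + C c * X * (esymTail a L * hsymAltSeries a) := by
    rw [esymTail_snoc, ← one_add_C_mul_X_mul_hsymAltSeries_snoc a c]
    ring
  have hres := congrArg (rescale (τ ^ 2)) hprod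
  rw [map_mul, map_add, map_add, map_one, map_mul (rescale _) (C c * X), hfactor] at hres
  simp only [phiSeries, esymSeries_snoc]
  linear_combination (-esymSeries b) * hres

end PhiSeries

section WeightedCoeffSum

variable (τ x : ℂ)

noncomputable def weightedCoeffSum (N : ℕ) (f : ℂ⟦X⟧) : ℂ :=
  ∑ κ ∈ range N, (1 - τ ^ (2 * (N - κ))) * (-τ) ^ κ * coeff κ f * x ^ (N - 1 - κ)

lemma weightedCoeffSum_add (N : ℕ) (f g : ℂ⟦X⟧) :
    weightedCoeffSum τ x N (f + g) = weightedCoeffSum τ x N f + weightedCoeffSum τ x N g := by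
  simp only [weightedCoeffSum, map_add, ← sum_add_distrib]
  exact sum_congr rfl fun _ _ => by ring

lemma weightedCoeffSum_C_mul (N : ℕ) (r : ℂ) (f : ℂ⟦X⟧) :
    weightedCoeffSum τ x N (C r * f) = r * weightedCoeffSum τ x N f := by
  simp only [weightedCoeffSum, coeff_C_mul, mul_sum]
  exact sum_congr rfl fun _ _ => by ring

lemma weightedCoeffSum_succ_X_mul (N : ℕ) (f : ℂ⟦X⟧) :
    weightedCoeffSum τ x (N + 1) (X * f) = -τ * weightedCoeffSum τ x N f := by
  rw [weightedCoeffSum, sum_range_succ', coeff_zero_X_mul, mul_zero, zero_mul, add_zero,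
    weightedCoeffSum, mul_sum]
  refine sum_congr rfl fun κ _ => ?_
  rw [coeff_succ_X_mul, Nat.add_sub_add_right, Nat.add_sub_cancel, Nat.sub_sub N 1 κ, add_comm 1 κ,
    pow_succ]
  ring

lemma weightedCoeffSum_succ_add_C_mul_X_mul (N : ℕ) (r : ℂ) (f g : ℂ⟦X⟧) :
    weightedCoeffSum τ x (N + 1) (f + C r * X * g)
      = weightedCoeffSum τ x (N + 1) f - r * τ * weightedCoeffSum τ x N g := by
  rw [weightedCoeffSum_add, mul_assoc, weightedCoeffSum_C_mul, weightedCoeffSum_succ_X_mul]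
  ring

lemma fP_eq_weightedCoeffSum {n l : ℕ} (lam : ℕ) (a : Fin n → ℂ) (b : Fin l → ℂ) :
    fP τ lam x a b = weightedCoeffSum τ x ((l : ℤ) - n + lam - 1).toNat (phiSeries τ lam a b) := by
  simp only [fP, weightedCoeffSum, coeff_phiSeries]

lemma gP_eq_weightedCoeffSum {n : ℕ} (lam : ℕ) (a : Fin n → ℂ) :
    gP τ lam x a = weightedCoeffSum τ x (lam - 1) (esymSeries a) := by
  simp only [gP, weightedCoeffSum, esymSeries, coeff_mk, Nat.sub_sub]

end WeightedCoeffSum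

section Recursions

variable (τ x : ℂ) {m k : ℕ} (a : Fin m → ℂ) (c : ℂ) (b : Fin k → ℂ)

lemma gP_snoc (L : ℕ) :
    gP τ (L + 1) x (Fin.snoc a c) = gP τ (L + 1) x a - c * τ * gP τ L x a := by
  rcases L with _ | N
  · simp [gP]
  · simp only [gP_eq_weightedCoeffSum, Nat.add_sub_cancel, esymSeries_snoc, add_mul, one_mul,
      weightedCoeffSum_succ_add_C_mul_X_mul]

lemma fP_snoc (hmk : m < k) (L : ℕ) :
    fP τ (L + 1) x (Fin.snoc a c) (Fin.snoc b (c * τ ^ 2))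
      = fP τ (L + 1) x a b - c * τ ^ 3 * fP τ L x a b := by
  have hN : (((k + 1 : ℕ) : ℤ) - (m + 1 : ℕ) + (L + 1 : ℕ) - 1).toNat = (k - m - 1 + L) + 1 := by
    omega
  have hN' : ((k : ℤ) - m + (L + 1 : ℕ) - 1).toNat = (k - m - 1 + L) + 1 := by omega
  have hN'' : ((k : ℤ) - m + L - 1).toNat = k - m - 1 + L := by omega
  rw [fP_eq_weightedCoeffSum, fP_eq_weightedCoeffSum, fP_eq_weightedCoeffSum, hN, hN', hN'',
    phiSeries_snoc, weightedCoeffSum_succ_add_C_mul_X_mul]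
  ring

end Recursions

-- Here `n = m + 1` and `l = k + 1`.
theorem stmt_11_general (q : ℂ) (hq0 : 0 < ‖q‖)
    (τ : ℂ) (hτ : τ = q⁻¹) (m k lam : ℕ) (hmk : m < k) (hlam : 1 ≤ lam)
    (x a0 : ℂ) (a : Fin m → ℂ) (b : Fin k → ℂ) :
    AP τ lam x (Fin.snoc a a0) (Fin.snoc b (a0 * τ ^ 2))
      = (x - a0 * τ) * (AP τ lam x a b - a0 * τ ^ 3 * AP τ (lam - 1) x a b) := by
  have hτ0 : τ ≠ 0 := hτ ▸ inv_ne_zero (norm_pos_iff.1 hq0)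
  obtain ⟨L, rfl⟩ : ∃ L, lam = L + 1 := ⟨lam - 1, by omega⟩
  have hb : a0 * τ ^ 2 * τ⁻¹ = a0 * τ := by field_simp
  have hexp : k + 1 - (m + 1) + (L + 1) - 1 = (k - m + L - 1) + 1 := by omega
  have hexp' : k - m + (L + 1) - 1 = (k - m + L - 1) + 1 := by omega
  simp only [AP, Fin.prod_univ_castSucc, Fin.snoc_castSucc, Fin.snoc_last, Nat.add_sub_cancel,
    fP_snoc τ x a a0 b hmk, gP_snoc, hb, hexp, hexp']
  ring

/-- Lemma recA: recursion for `A^{(nl)}_λ`; here `n = m + 1`,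
`l = k + 1`, `1 ≤ n < l`, `λ ≥ 1`. -/
theorem stmt_11 (q : ℂ) (hq0 : 0 < ‖q‖) (hq1 : ‖q‖ < 1)
    (τ : ℂ) (hτ : τ = q⁻¹) (m k lam : ℕ) (hmk : m < k) (hlam : 1 ≤ lam)
    (x a0 : ℂ) (a : Fin m → ℂ) (b : Fin k → ℂ) :
    AP τ lam x (Fin.snoc a a0) (Fin.snoc b (a0 * τ ^ 2))
      = (x - a0 * τ) * (AP τ lam x a b - a0 * τ ^ 3 * AP τ (lam - 1) x a b) :=
  stmt_11_general q hq0 τ hτ m k lam hmk hlam x a0 a b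
end
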